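/- arXiv:1603.09165 — 11 statements merged into one kernel-verified Lean document; each statement's English description precedes it below -/
import Mathlib

section
/- A partial dynamical system G ↷ X is topologically free if and only if the associated transformation groupoid G ⋉ X is topologically principal, i.e., the set of points x ∈ X such that the only g ∈ G with x ∈ U_{g⁻¹} and g.x = x is g = e, is dense in X. -/
/-!
Write `W g = {x ∈ U_{g⁻¹} | g.x ≠ x}`; it is open, being the preimage of the complement of the
closed diagonal under `x ↦ (g.x, x)`. If the units with trivial isotropy are dense, they are dense
in each open `U_{g⁻¹}` and lie in `W g` there for `g ≠ 1`. Conversely, if every `W g` is dense in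
`U_{g⁻¹}`, then `(closure U_{g⁻¹})ᶜ ∪ W g` is open and dense, and by the Baire category theorem
(`X` is locally compact Hausdorff, `G` countable) the intersection over `g ≠ 1` is dense; it
consists of units with trivial isotropy.
-/

open Set

/-- A partial action of a group `G` on a topological space `X`. -/
structure PartialAction (G X : Type*) [Group G] [TopologicalSpace X] where
  U : G → Set X
  act : G → X → X
  isOpen : ∀ g, IsOpen (U g)
  U_one : U 1 = Set.univ
  act_one : ∀ x, act 1 x = x
  mapsTo : ∀ g, Set.MapsTo (act g) (U g⁻¹) (U g)
  continuousOn : ∀ g, ContinuousOn (act g) (U g⁻¹)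
  act_inv : ∀ g, ∀ x ∈ U g⁻¹, act g⁻¹ (act g x) = x
  comp_mem : ∀ g h : G, ∀ x ∈ U h⁻¹, act h x ∈ U g⁻¹ → x ∈ U (g * h)⁻¹
  act_mul : ∀ g h : G, ∀ x ∈ U h⁻¹, act h x ∈ U g⁻¹ → act (g * h) x = act g (act h x)

theorem dense_compl_closure_union {X : Type*} [TopologicalSpace X] {s t : Set X}
    (hst : s ⊆ closure t) : Dense ((closure s)ᶜ ∪ t) := by
  have hclosure : closure s ⊆ closure t := closure_minimal hst isClosed_closure
  refine dense_iff_closure_eq.mpr (eq_univ_of_univ_subset fun x _ => ?_)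
  rw [closure_union]
  by_cases hx : x ∈ closure s
  · exact Or.inr (hclosure hx)
  · exact Or.inl (subset_closure hx)

namespace PartialAction

variable {G X : Type*} [Group G] [TopologicalSpace X] (α : PartialAction G X)

def movedSet (g : G) : Set X := {x ∈ α.U g⁻¹ | α.act g x ≠ x}

theorem isOpen_movedSet [T2Space X] (g : G) : IsOpen (α.movedSet g) :=
  ((α.continuousOn g).prodMk continuousOn_id).isOpen_inter_preimage (α.isOpen g⁻¹)
    isClosed_diagonal.isOpen_compl

theorem dense_trivialIsotropy_of_subset_closure_movedSet [Countable G] [T2Space X]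
    [LocallyCompactSpace X]
    (h : ∀ g : G, g ≠ 1 → α.U g⁻¹ ⊆ closure (α.movedSet g)) :
    Dense {x : X | ∀ g : G, x ∈ α.U g⁻¹ → α.act g x = x → g = 1} := by
  have hdense : Dense (⋂ g ∈ {g : G | g ≠ 1}, (closure (α.U g⁻¹))ᶜ ∪ α.movedSet g) :=
    dense_biInter_of_isOpen
      (fun g _ => isClosed_closure.isOpen_compl.union (α.isOpen_movedSet g))
      (to_countable _) (fun g hg => dense_compl_closure_union (h g hg))
  refine hdense.mono fun x hx g hxg hfix => by_contra fun hg => ?_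
  rcases mem_iInter₂.mp hx g hg with hout | hmoved
  · exact hout (subset_closure hxg)
  · exact hmoved.2 hfix

theorem subset_closure_movedSet_of_dense
    (hD : Dense {x : X | ∀ g : G, x ∈ α.U g⁻¹ → α.act g x = x → g = 1})
    {g : G} (hg : g ≠ 1) : α.U g⁻¹ ⊆ closure (α.movedSet g) :=
  (hD.open_subset_closure_inter (α.isOpen g⁻¹)).trans <|
    closure_mono fun _ ⟨hx, htriv⟩ => ⟨hx, fun hfix => hg (htriv g hx hfix)⟩

end PartialAction

theorem stmt_2_general {G X : Type*} [Group G] [Countable G] [TopologicalSpace X]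
    [LocallyCompactSpace X] [T2Space X]
    (α : PartialAction G X) :
    (∀ g : G, g ≠ 1 → α.U g⁻¹ ⊆ closure {x ∈ α.U g⁻¹ | α.act g x ≠ x}) ↔
      Dense {x : X | ∀ g : G, x ∈ α.U g⁻¹ → α.act g x = x → g = 1} :=
  ⟨α.dense_trivialIsotropy_of_subset_closure_movedSet,
    fun hD _ hg => α.subset_closure_movedSet_of_dense hD hg⟩

/-- A partial system `G ↷ X` is topologically free iff the transformation groupoid
`G ⋉ X` is topologically principal, i.e. the set of units with trivial isotropy is dense. -/
theorem stmt_2 {G X : Type*} [Group G] [Countable G] [TopologicalSpace X]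
    [LocallyCompactSpace X] [T2Space X] [SecondCountableTopology X]
    (α : PartialAction G X) :
    (∀ g : G, g ≠ 1 → α.U g⁻¹ ⊆ closure {x ∈ α.U g⁻¹ | α.act g x ≠ x}) ↔
      Dense {x : X | ∀ g : G, x ∈ α.U g⁻¹ → α.act g x = x → g = 1} :=
  stmt_2_general α
end

section
/- The canonical homomorphism from the free semigroup F⁺_S on a countable set S to the metabelianization F_S/F_S'' of the free group F_S is injective. -/
/-!
Let `K` be the fraction field of `ℤ[X_s : s ∈ S]` and send the letter `s` to the affine map
`r ↦ X_s * r + 1` of `K`. The affine maps `r ↦ u * r + a` form the group `K ⋊ Kˣ`, which is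
metabelian, so this representation of `F_S` factors through `F_S / F_S''`. A positive word
`s₁ ⋯ sₙ` sends `1` to `∑_{i ≤ n} X_{s₁} ⋯ X_{sᵢ}`, and this polynomial determines the word:
its first letter `s₁` is the only variable `X_s` occurring with coefficient `1`, and the rest of
the word is read off from `(p - 1) / X_{s₁}` in the same way.
-/

open Multiplicative MvPolynomial

theorem SemidirectProduct.derivedSeries_two_eq_bot {N G : Type*} [CommGroup N] [CommGroup G]
    {φ : G →* MulAut N} : derivedSeries (N ⋊[φ] G) 2 = ⊥ := by
  have h_one : derivedSeries (N ⋊[φ] G) 1 ≤ (inl : N →* N ⋊[φ] G).range := by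
    rw [derivedSeries_one, range_inl_eq_ker_rightHom]
    exact Abelianization.commutator_subset_ker _
  have h_inl : ⁅(inl : N →* N ⋊[φ] G).range, (inl : N →* N ⋊[φ] G).range⁆ = ⊥ := by
    rw [Subgroup.commutator_eq_bot_iff_le_centralizer]
    rintro _ ⟨a, rfl⟩ _ ⟨b, rfl⟩
    rw [← map_mul, ← map_mul, mul_comm]
  exact le_bot_iff.mp (h_inl ▸ Subgroup.commutator_mono h_one h_one)

/-- `⟨ofAdd a, u⟩` is the affine map `r ↦ u * r + a`. -/
abbrev AffineGroup (R : Type*) [CommRing R] : Type _ :=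
  Multiplicative R ⋊[(MulAutMultiplicative R).symm.toMonoidHom.comp
    (DistribMulAction.toAddAut Rˣ R)] Rˣ

namespace AffineGroup

variable {R : Type*} [CommRing R]

instance : MulAction (AffineGroup R) R where
  smul g r := g.right * r + toAdd g.left
  one_smul r := show ((1 : Rˣ) : R) * r + toAdd (1 : Multiplicative R) = r by simp
  mul_smul g h r := by
    show (g * h).right * r + toAdd (g * h).left =
      g.right * (h.right * r + toAdd h.left) + toAdd g.left
    simp only [SemidirectProduct.mul_left, SemidirectProduct.mul_right, toAdd_mul, Units.val_mul,
      MulEquiv.toMonoidHom_eq_coe, MonoidHom.coe_comp, MonoidHom.coe_coe, Function.comp_apply,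
      DistribMulAction.toAddAut_apply, MulAutMultiplicative_symm_apply_apply,
      DistribMulAction.toAddEquiv_apply, Units.smul_def, smul_eq_mul, toAdd_ofAdd]
    ring

def mulAddOne (u : Rˣ) : AffineGroup R := ⟨ofAdd 1, u⟩

lemma mulAddOne_smul (u : Rˣ) (r : R) : mulAddOne u • r = u * r + 1 := rfl

end AffineGroup

/-- `prefixPoly [s₁, …, sₙ] = ∑_{i ≤ n} X_{s₁} ⋯ X_{sᵢ}`. -/
noncomputable def prefixPoly {S : Type*} : List S → MvPolynomial S ℤ
  | [] => 1
  | s :: l => 1 + X s * prefixPoly l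

section PrefixPoly

variable {S : Type*}

lemma coeff_zero_prefixPoly (l : List S) : coeff 0 (prefixPoly l) = 1 := by
  cases l <;> simp [prefixPoly, ← constantCoeff_eq]

lemma coeff_single_prefixPoly [DecidableEq S] (s : S) (l : List S) :
    coeff (Finsupp.single s 1) (prefixPoly l) = if l.head? = some s then 1 else 0 := by
  have hs : Finsupp.single s (1 : ℕ) ≠ 0 := Finsupp.single_ne_zero.mpr one_ne_zero
  cases l with
  | nil => simpa [prefixPoly, coeff_one] using hs.symm
  | cons t l =>
    rw [prefixPoly, coeff_add, coeff_one, if_neg hs.symm, zero_add, coeff_X_mul']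
    by_cases h : t = s
    · subst h
      simp [coeff_zero_prefixPoly]
    · simp [Finsupp.support_single, h]

theorem prefixPoly_injective : Function.Injective (prefixPoly : List S → MvPolynomial S ℤ) := by
  classical
  intro l₁
  induction l₁ with
  | nil =>
    rintro (_ | ⟨t, v⟩) h
    · rfl
    · simpa [coeff_single_prefixPoly] using congrArg (coeff (Finsupp.single t 1)) h
  | cons s u ih =>
    rintro (_ | ⟨t, v⟩) h
    · simpa [coeff_single_prefixPoly] using congrArg (coeff (Finsupp.single s 1)) h
    · have hts : t = s := by
        simpa [coeff_single_prefixPoly] using (congrArg (coeff (Finsupp.single s 1)) h).symm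
      subst hts
      simp only [prefixPoly, add_right_inj, mul_right_inj' (X_ne_zero t)] at h
      rw [ih h]

end PrefixPoly

section AffineRep

variable {S R : Type*} [CommRing R]

noncomputable def affineRep (x : S → Rˣ) : FreeGroup S →* AffineGroup R :=
  FreeGroup.lift fun s => AffineGroup.mulAddOne (x s)

lemma affineRep_lift_ofList_smul_one (f : MvPolynomial S ℤ →+* R) (x : S → Rˣ)
    (hx : ∀ s, (x s : R) = f (X s)) (l : List S) :
    affineRep x (FreeMonoid.lift FreeGroup.of (FreeMonoid.ofList l)) • (1 : R) =
      f (prefixPoly l) := by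
  induction l with
  | nil => simp [prefixPoly]
  | cons s l ih =>
    rw [FreeMonoid.ofList_cons, map_mul, map_mul, mul_smul, ih, FreeMonoid.lift_eval_of,
      affineRep, FreeGroup.lift_apply_of, AffineGroup.mulAddOne_smul, hx, prefixPoly, map_add,
      map_one, map_mul, add_comm]

theorem affineRep_lift_injective (f : MvPolynomial S ℤ →+* R) (hf : Function.Injective f)
    (x : S → Rˣ) (hx : ∀ s, (x s : R) = f (X s)) :
    Function.Injective fun w : FreeMonoid S => affineRep x (FreeMonoid.lift FreeGroup.of w) := by
  intro w₁ w₂ h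
  obtain ⟨l₁, rfl⟩ := FreeMonoid.ofList.surjective w₁
  obtain ⟨l₂, rfl⟩ := FreeMonoid.ofList.surjective w₂
  have h_one := congrArg (· • (1 : R)) h
  simp only [affineRep_lift_ofList_smul_one f x hx] at h_one
  rw [prefixPoly_injective (hf h_one)]

end AffineRep

theorem stmt_3_general (S : Type*) :
    Function.Injective (fun w : FreeMonoid S =>
      haveI : (derivedSeries (FreeGroup S) 2).Normal := derivedSeries_normal _ _
      QuotientGroup.mk' (derivedSeries (FreeGroup S) 2)
        ((FreeMonoid.lift (fun a => FreeGroup.of a : S → FreeGroup S)) w)) := by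
  let K := FractionRing (MvPolynomial S ℤ)
  have hf : Function.Injective (algebraMap (MvPolynomial S ℤ) K) := IsFractionRing.injective _ _
  let x : S → Kˣ := fun s => Units.mk0 _ ((map_ne_zero_iff _ hf).mpr (X_ne_zero s))
  have hker : derivedSeries (FreeGroup S) 2 ≤ (affineRep x).ker := by
    rw [← Subgroup.map_eq_bot_iff, ← le_bot_iff]
    exact (map_derivedSeries_le_derivedSeries _ 2).trans
      SemidirectProduct.derivedSeries_two_eq_bot.le
  exact Function.Injective.of_comp (f := QuotientGroup.lift _ _ hker)
    (affineRep_lift_injective _ hf x fun _ => rfl)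

/-- The canonical homomorphism from the free monoid on a countable set `S` to the
metabelianization `F_S / F_S''` (quotient of the free group on `S` by the second derived
subgroup) is injective. -/
theorem stmt_3 (S : Type*) [Countable S] :
    Function.Injective (fun w : FreeMonoid S =>
      haveI : (derivedSeries (FreeGroup S) 2).Normal := derivedSeries_normal _ _
      QuotientGroup.mk' (derivedSeries (FreeGroup S) 2)
        ((FreeMonoid.lift (fun a => FreeGroup.of a : S → FreeGroup S)) w)) :=
  stmt_3_general S
end

section
/- Let P be a subsemigroup of a group G. Then the set G₀ = {g ∈ G : for all p ∈ P, pP ∩ gP ≠ ∅ and pP ∩ g⁻¹P ≠ ∅} is a subgroup of G. -/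
/-!
The `g` with `pP ∩ gP ≠ ∅` for all `p ∈ P` form a submonoid: `pP` meets `1P` in `p²`, and if
`px = gy` and `yx' = hy'` with `x, y, x', y' ∈ P`, then `p(xx') = gyx' = (gh)y'`.
`G₀` consists of the `g` such that both `g` and `g⁻¹` lie in this submonoid, and the elements of a
submonoid whose inverses also lie in it always form a subgroup.
-/

namespace Submonoid

variable {G : Type*} [Group G]

def largestSubgroup (S : Submonoid G) : Subgroup G where
  carrier := {g | g ∈ S ∧ g⁻¹ ∈ S}
  one_mem' := by simp [S.one_mem]
  mul_mem' := fun ⟨ha, ha'⟩ ⟨hb, hb'⟩ => ⟨S.mul_mem ha hb, by rw [mul_inv_rev]; exact S.mul_mem hb' ha'⟩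
  inv_mem' := fun ⟨ha, ha'⟩ => ⟨ha', by rwa [inv_inv]⟩

theorem mem_largestSubgroup {S : Submonoid G} {g : G} :
    g ∈ S.largestSubgroup ↔ g ∈ S ∧ g⁻¹ ∈ S :=
  Iff.rfl

end Submonoid

namespace Subsemigroup

variable {G : Type*} [Group G] (P : Subsemigroup G)

def idealMeetingSubmonoid : Submonoid G where
  carrier := {g | ∀ p ∈ P, ∃ x ∈ P, ∃ y ∈ P, p * x = g * y}
  one_mem' := fun p hp => ⟨p, hp, p * p, P.mul_mem hp hp, (one_mul _).symm⟩
  mul_mem' := by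
    intro g h hg hh p hp
    obtain ⟨x, hx, y, hy, hpg⟩ := hg p hp
    obtain ⟨x', hx', y', hy', hyh⟩ := hh y hy
    refine ⟨x * x', P.mul_mem hx hx', y', hy', ?_⟩
    calc p * (x * x') = g * (y * x') := by rw [← mul_assoc, hpg, mul_assoc]
      _ = g * h * y' := by rw [hyh, mul_assoc]

variable {P}

theorem mem_idealMeetingSubmonoid {g : G} :
    g ∈ idealMeetingSubmonoid P ↔ ∀ p ∈ P, ∃ x ∈ P, ∃ y ∈ P, p * x = g * y :=
  Iff.rfl

theorem nonempty_inter_translates_iff {p g : G} :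
    ({z | ∃ y ∈ P, z = p * y} ∩ {z | ∃ y ∈ P, z = g * y}).Nonempty ↔
      ∃ x ∈ P, ∃ y ∈ P, p * x = g * y := by
  constructor
  · rintro ⟨_, ⟨x, hx, rfl⟩, y, hy, hxy⟩
    exact ⟨x, hx, y, hy, hxy⟩
  · rintro ⟨x, hx, y, hy, hxy⟩
    exact ⟨p * x, ⟨x, hx, rfl⟩, y, hy, hxy⟩

end Subsemigroup

/-- For a subsemigroup `P` of a group `G`, the set
`G₀ = {g : ∀ p ∈ P, pP ∩ gP ≠ ∅ and pP ∩ g⁻¹P ≠ ∅}` is a subgroup of `G`. -/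
theorem stmt_4 {G : Type*} [Group G] (P : Subsemigroup G) :
    ∃ H : Subgroup G, ∀ g : G, g ∈ H ↔
      ∀ p ∈ P, ({z | ∃ y ∈ P, z = p * y} ∩ {z | ∃ y ∈ P, z = g * y}).Nonempty ∧
        ({z | ∃ y ∈ P, z = p * y} ∩ {z | ∃ y ∈ P, z = g⁻¹ * y}).Nonempty := by
  refine ⟨(Subsemigroup.idealMeetingSubmonoid P).largestSubgroup, fun g => ?_⟩
  simp only [Submonoid.mem_largestSubgroup, Subsemigroup.mem_idealMeetingSubmonoid,
    Subsemigroup.nonempty_inter_translates_iff, ← forall_and]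
end

section
/- Let P be a left cancellative subsemigroup of a group, J its set of constructible right ideals (finite unions condition), and E the corresponding semilattice. Every maximal character of E lies in Ω_P: that is, if χ is a maximal character and X, X₁, …, Xₙ ∈ J satisfy X = X₁ ∪ ⋯ ∪ Xₙ and χ(X) = 1, then χ(Xᵢ) = 1 for some i. -/
/-- The constructible right ideals of a subsemigroup `P ⊆ G` (as subsets of `G`):
the semilattice generated by `P` under the operations `X ↦ p⁻¹(qX) ∩ P` and intersection,
together with `∅`. -/
inductive IsConstr {G : Type*} [Group G] (P : Set G) : Set G → Prop
  | base : IsConstr P P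
  | empty : IsConstr P ∅
  | step (p q : G) (hp : p ∈ P) (hq : q ∈ P) (X : Set G) (hX : IsConstr P X) :
      IsConstr P {y : G | y ∈ P ∧ ∃ x ∈ X, p * y = q * x}
  | inter (X Y : Set G) (hX : IsConstr P X) (hY : IsConstr P Y) : IsConstr P (X ∩ Y)

/-- A character on the semilattice of constructible right ideals of `P`. -/
def IsCharOn {G : Type*} [Group G] (P : Set G) (χ : Set G → Prop) : Prop :=
  χ P ∧ ¬ χ ∅ ∧ (∀ X Y : Set G, IsConstr P X → IsConstr P Y → (χ (X ∩ Y) ↔ χ X ∧ χ Y)) ∧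
    ∀ X : Set G, χ X → IsConstr P X

/-- A maximal character: its filter is maximal among filters of characters. -/
def IsMaxCharOn {G : Type*} [Group G] (P : Set G) (χ : Set G → Prop) : Prop :=
  IsCharOn P χ ∧ ∀ ψ : Set G → Prop, IsCharOn P ψ → (∀ X, χ X → ψ X) → ∀ X, ψ X → χ X

/-! If `χ(Xᵢ) = 0` for every `i`, maximality of `χ` yields constructible `Yᵢ` with `χ(Yᵢ) = 1`
and `Xᵢ ∩ Yᵢ = ∅`: otherwise the sets containing some `Xᵢ ∩ Y` with `χ(Y) = 1` would form a
strictly larger filter of a character. Then `Y = P ∩ ⋂ Yᵢ` has `χ(Y) = 1` and is disjoint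
from `X = ⋃ Xᵢ`, so `χ(X ∩ Y) = χ(∅) = 0`, contradicting `χ(X) = 1`. -/

def joinFilter {G : Type*} [Group G] (P : Set G) (χ : Set G → Prop) (Z : Set G) :
    Set G → Prop :=
  fun W => IsConstr P W ∧ ∃ Y, χ Y ∧ Z ∩ Y ⊆ W

namespace IsCharOn

variable {G : Type*} [Group G] {P : Set G} {χ : Set G → Prop}

theorem inter (hχ : IsCharOn P χ) {X Y : Set G} (hX : χ X) (hY : χ Y) : χ (X ∩ Y) :=
  (hχ.2.2.1 X Y (hχ.2.2.2 X hX) (hχ.2.2.2 Y hY)).2 ⟨hX, hY⟩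

theorem inter_nonempty (hχ : IsCharOn P χ) {X Y : Set G} (hX : χ X) (hY : χ Y) :
    (X ∩ Y).Nonempty :=
  Set.nonempty_iff_ne_empty.2 fun h => hχ.2.1 (h ▸ hχ.inter hX hY)

theorem inter_biInter {ι : Type*} (hχ : IsCharOn P χ) (Ys : ι → Set G) (s : Finset ι)
    (hYs : ∀ i ∈ s, χ (Ys i)) : χ (P ∩ ⋂ i ∈ s, Ys i) := by
  classical
  induction s using Finset.induction_on with
  | empty => simpa using hχ.1
  | insert a s _ ih =>
    rw [Finset.set_biInter_insert, Set.inter_left_comm]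
    exact hχ.inter (hYs a (Finset.mem_insert_self a s))
      (ih fun i hi => hYs i (Finset.mem_insert_of_mem hi))

theorem inter_iInter {ι : Type*} [Finite ι] (hχ : IsCharOn P χ) (Ys : ι → Set G)
    (hYs : ∀ i, χ (Ys i)) : χ (P ∩ ⋂ i, Ys i) := by
  have := Fintype.ofFinite ι
  simpa using hχ.inter_biInter Ys Finset.univ fun i _ => hYs i

theorem isCharOn_joinFilter (hχ : IsCharOn P χ) {Z : Set G}
    (hZ : ∀ Y, χ Y → (Z ∩ Y).Nonempty) : IsCharOn P (joinFilter P χ Z) := by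
  refine ⟨⟨.base, P, hχ.1, Set.inter_subset_right⟩, ?_, fun A B hA hB => ⟨?_, ?_⟩,
    fun W hW => hW.1⟩
  · rintro ⟨-, Y, hY, hZY⟩
    exact Set.not_nonempty_empty (Set.Nonempty.mono hZY (hZ Y hY))
  · rintro ⟨-, Y, hY, hZY⟩
    exact ⟨⟨hA, Y, hY, hZY.trans Set.inter_subset_left⟩,
      ⟨hB, Y, hY, hZY.trans Set.inter_subset_right⟩⟩
  · rintro ⟨⟨-, Y₁, hY₁, hZY₁⟩, ⟨-, Y₂, hY₂, hZY₂⟩⟩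
    refine ⟨.inter A B hA hB, Y₁ ∩ Y₂, hχ.inter hY₁ hY₂, fun x hx => ⟨?_, ?_⟩⟩
    · exact hZY₁ ⟨hx.1, hx.2.1⟩
    · exact hZY₂ ⟨hx.1, hx.2.2⟩

theorem le_joinFilter (hχ : IsCharOn P χ) (Z : Set G) {W : Set G} (hW : χ W) :
    joinFilter P χ Z W :=
  ⟨hχ.2.2.2 W hW, W, hW, Set.inter_subset_right⟩

theorem joinFilter_self (hχ : IsCharOn P χ) {Z : Set G} (hZ : IsConstr P Z) :
    joinFilter P χ Z Z :=
  ⟨hZ, P, hχ.1, Set.inter_subset_left⟩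

end IsCharOn

theorem IsMaxCharOn.exists_disjoint {G : Type*} [Group G] {P : Set G} {χ : Set G → Prop}
    (hχ : IsMaxCharOn P χ) {Z : Set G} (hZ : IsConstr P Z) (hZχ : ¬ χ Z) :
    ∃ Y, χ Y ∧ Disjoint Z Y := by
  by_contra! hmeet
  have hjoin := hχ.1.isCharOn_joinFilter fun Y hY =>
    Set.not_disjoint_iff_nonempty_inter.1 (hmeet Y hY)
  exact hZχ (hχ.2 _ hjoin (fun W => hχ.1.le_joinFilter Z) Z (hχ.1.joinFilter_self hZ))

theorem stmt_6_general {G : Type*} [Group G] (P : Subsemigroup G)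
    (χ : Set G → Prop) (hχ : IsMaxCharOn (P : Set G) χ)
    (n : ℕ) (X : Set G) (Xs : Fin n → Set G)
    (hXs : ∀ i, IsConstr (P : Set G) (Xs i))
    (hunion : X = ⋃ i, Xs i) (hχX : χ X) :
    ∃ i, χ (Xs i) := by
  by_contra! hXsχ
  choose Ys hYsχ hdisj using fun i => hχ.exists_disjoint (hXs i) (hXsχ i)
  have hY := hχ.1.inter_iInter Ys hYsχ
  have hXY : Disjoint X ((P : Set G) ∩ ⋂ i, Ys i) := by
    rw [hunion, Set.disjoint_iUnion_left]
    exact fun i => (hdisj i).mono_right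
      (Set.inter_subset_right.trans (Set.iInter_subset Ys i))
  exact Set.not_nonempty_empty (hXY.inter_eq ▸ hχ.1.inter_nonempty hχX hY)

/-- Every maximal character of the semilattice of constructible right ideals lies in `Ω_P`:
if `X = X₁ ∪ ⋯ ∪ Xₙ` with all sets constructible and `χ(X) = 1`, then `χ(Xᵢ) = 1` for
some `i`. -/
theorem stmt_6 {G : Type*} [Group G] (P : Subsemigroup G)
    (χ : Set G → Prop) (hχ : IsMaxCharOn (P : Set G) χ)
    (n : ℕ) (X : Set G) (Xs : Fin n → Set G)
    (hX : IsConstr (P : Set G) X) (hXs : ∀ i, IsConstr (P : Set G) (Xs i))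
    (hunion : X = ⋃ i, Xs i) (hχX : χ X) :
    ∃ i, χ (Xs i) :=
  stmt_6_general P χ hχ n X Xs hXs hunion hχX
end

section
/- Let P be a subsemigroup of a group G containing the identity e, with trivial group of units P* = {e}. For p ∈ P and g ∈ G, if gp ∈ X ⟺ p ∈ X holds for every constructible right ideal X of P, then g = e. -/
open Pointwise

section

variable {G : Type*} [Group G] {P : Submonoid G}

theorem Submonoid.smul_coe_subset {q : G} (hq : q ∈ P) : q • (P : Set G) ⊆ P := by
  rintro _ ⟨x, hx, rfl⟩
  exact P.mul_mem hq hx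

theorem IsConstr.smul {q : G} (hq : q ∈ P) : IsConstr (P : Set G) (q • (P : Set G)) := by
  convert IsConstr.step 1 q P.one_mem hq P IsConstr.base using 1
  ext y
  simp only [Set.mem_smul_set, smul_eq_mul, one_mul, Set.mem_ofPred_eq]
  constructor
  · rintro ⟨x, hx, rfl⟩
    exact ⟨P.mul_mem hq hx, x, hx, rfl⟩
  · rintro ⟨-, x, hx, rfl⟩
    exact ⟨x, hx, rfl⟩

theorem eq_of_mem_smul_of_mem_smul (hunits : ∀ p ∈ P, p⁻¹ ∈ P → p = 1) {a b : G}
    (hab : a ∈ b • (P : Set G)) (hba : b ∈ a • (P : Set G)) : a = b := by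
  obtain ⟨x, hx, rfl⟩ := hab
  obtain ⟨y, hy, hxy⟩ := hba
  simp only [smul_eq_mul, mul_assoc, mul_eq_left] at hxy
  have hx_inv : x⁻¹ = y := inv_eq_of_mul_eq_one_right hxy
  show b * x = b
  rw [hunits x hx (hx_inv ▸ hy), mul_one]

end

/-- If `P` is a submonoid of `G` with trivial units and for `p ∈ P`, `g ∈ G` one has
`gp ∈ X ↔ p ∈ X` for every constructible right ideal `X` of `P`, then `g = e`. -/
theorem stmt_7 {G : Type*} [Group G] (P : Submonoid G)
    (hunits : ∀ p ∈ P, p⁻¹ ∈ P → p = 1)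
    (p : G) (hp : p ∈ P) (g : G)
    (h : ∀ X : Set G, IsConstr (P : Set G) X → (g * p ∈ X ↔ p ∈ X)) :
    g = 1 := by
  have hgp : g * p ∈ p • (P : Set G) :=
    (h _ (IsConstr.smul hp)).2 ⟨1, P.one_mem, mul_one p⟩
  have hgpP : g * p ∈ P := Submonoid.smul_coe_subset hp hgp
  have hpgp : p ∈ (g * p) • (P : Set G) :=
    (h _ (IsConstr.smul hgpP)).1 ⟨1, P.one_mem, mul_one _⟩
  exact mul_eq_right.mp (eq_of_mem_smul_of_mem_smul hunits hgp hpgp)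
end

section
/- Let (G,P) be a quasi-lattice ordered group and let P = ⟨S, R⟩⁺ be presented by a positive r-complete presentation such that for every generator u ∈ S there is a generator v ∈ S with uP ∩ vP = ∅. Then G₀ := {g ∈ G : pP ∩ gP ≠ ∅ ≠ pP ∩ g⁻¹P for all p ∈ P} is trivial, i.e., G₀ = {e}. -/
/-!
If `g ∈ G₀`, then `gP` meets `P`, so `gP ∩ P = pP` by quasi-lattice order. Were `p ≠ e`, we
would have `pP ⊆ uP` for a generator `u`, and a generator `v` with `uP ∩ vP = ∅` would give
`gP ∩ vP = ∅`, contradicting `g ∈ G₀`. Hence `gP ∩ P = P`, i.e. `g⁻¹ ∈ P`; by symmetry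
`g ∈ P` as well, and `P ∩ P⁻¹ = {e}` forces `g = e`.
-/

namespace QuasiLatticeOrdered

variable {G : Type*} [Group G] (P : Submonoid G)

def rightIdeal (g : G) : Set G := {z | ∃ y ∈ P, z = g * y}

variable {P}

theorem mem_rightIdeal_self (g : G) : g ∈ rightIdeal P g :=
  ⟨1, P.one_mem, (mul_one g).symm⟩

theorem rightIdeal_one : rightIdeal P 1 = P := by
  ext z
  simp [rightIdeal]

theorem rightIdeal_subset_of_mem {p q : G} (hq : q ∈ rightIdeal P p) :
    rightIdeal P q ⊆ rightIdeal P p := by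
  obtain ⟨y, hy, rfl⟩ := hq
  rintro _ ⟨y', hy', rfl⟩
  exact ⟨y * y', P.mul_mem hy hy', mul_assoc p y y'⟩

theorem rightIdeal_subset_of_mem_submonoid {p : G} (hp : p ∈ P) : rightIdeal P p ⊆ P := by
  rw [← rightIdeal_one]
  exact rightIdeal_subset_of_mem (by rwa [rightIdeal_one])

theorem inv_mem_of_one_mem_rightIdeal {h : G} (h1 : 1 ∈ rightIdeal P h) : h⁻¹ ∈ P := by
  obtain ⟨y, hy, h1y⟩ := h1
  rwa [inv_eq_of_mul_eq_one_right h1y.symm]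

theorem eq_one_of_forall_rightIdeal_inter_nonempty {S : Set G}
    (hgen : ∀ p ∈ P, p ≠ 1 → ∃ u ∈ S, p ∈ rightIdeal P u)
    (hdisj : ∀ u ∈ S, ∃ v ∈ S, rightIdeal P u ∩ rightIdeal P v = ∅)
    {p : G} (hp : p ∈ P) (hmeet : ∀ v ∈ S, (rightIdeal P p ∩ rightIdeal P v).Nonempty) :
    p = 1 := by
  by_contra hp1
  obtain ⟨u, hu, hpu⟩ := hgen p hp hp1
  obtain ⟨v, hv, huv⟩ := hdisj u hu
  have hsub : rightIdeal P p ⊆ rightIdeal P u := rightIdeal_subset_of_mem hpu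
  exact (hmeet v hv).ne_empty (Set.subset_empty_iff.mp (huv ▸ Set.inter_subset_inter_left _ hsub))

theorem inv_mem_of_forall_rightIdeal_inter_nonempty {S : Set G} (hS : S ⊆ (P : Set G))
    (hqlo : ∀ g : G, (rightIdeal P g ∩ (P : Set G)).Nonempty →
      ∃ p ∈ P, rightIdeal P g ∩ (P : Set G) = rightIdeal P p)
    (hgen : ∀ p ∈ P, p ≠ 1 → ∃ u ∈ S, p ∈ rightIdeal P u)
    (hdisj : ∀ u ∈ S, ∃ v ∈ S, rightIdeal P u ∩ rightIdeal P v = ∅)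
    {h : G} (hmeet : ∀ p ∈ P, (rightIdeal P p ∩ rightIdeal P h).Nonempty) : h⁻¹ ∈ P := by
  have hP : (rightIdeal P h ∩ (P : Set G)).Nonempty := by
    simpa only [rightIdeal_one, Set.inter_comm] using hmeet 1 P.one_mem
  obtain ⟨p, hp, hpeq⟩ := hqlo h hP
  have hp1 : p = 1 := by
    refine eq_one_of_forall_rightIdeal_inter_nonempty hgen hdisj hp fun v hv => ?_
    obtain ⟨x, hxv, hxh⟩ := hmeet v (hS hv)
    exact ⟨x, hpeq ▸ ⟨hxh, rightIdeal_subset_of_mem_submonoid (hS hv) hxv⟩, hxv⟩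
  apply inv_mem_of_one_mem_rightIdeal
  have h1 : (1 : G) ∈ rightIdeal P h ∩ (P : Set G) := by
    rw [hpeq, hp1]
    exact mem_rightIdeal_self 1
  exact h1.1

end QuasiLatticeOrdered

open QuasiLatticeOrdered in
/-- Let `(G,P)` be quasi-lattice ordered (`P ∩ P⁻¹ = {e}` and every nonempty `gP ∩ P` is
a principal right ideal `pP`), with a generating set `S ⊆ P` such that every `p ≠ e` in
`P` lies in `uP` for some `u ∈ S`, and for every `u ∈ S` there is `v ∈ S` with
`uP ∩ vP = ∅`. Then `G₀ = {g : pP ∩ gP ≠ ∅ ≠ pP ∩ g⁻¹P for all p ∈ P}` is trivial. -/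
theorem stmt_8 {G : Type*} [Group G] (P : Submonoid G) (S : Set G) (hS : S ⊆ (P : Set G))
    (hunits : ∀ p ∈ P, p⁻¹ ∈ P → p = 1)
    (hqlo : ∀ g : G, ({z | ∃ y ∈ P, z = g * y} ∩ (P : Set G)).Nonempty →
        ∃ p ∈ P, {z | ∃ y ∈ P, z = g * y} ∩ (P : Set G) = {z | ∃ y ∈ P, z = p * y})
    (hgen : ∀ p ∈ P, p ≠ 1 → ∃ u ∈ S, ∃ y ∈ P, p = u * y)
    (hdisj : ∀ u ∈ S, ∃ v ∈ S,
        {z | ∃ y ∈ P, z = u * y} ∩ {z | ∃ y ∈ P, z = v * y} = ∅)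
    (g : G)
    (hg : ∀ p ∈ P, ({z | ∃ y ∈ P, z = p * y} ∩ {z | ∃ y ∈ P, z = g * y}).Nonempty ∧
        ({z | ∃ y ∈ P, z = p * y} ∩ {z | ∃ y ∈ P, z = g⁻¹ * y}).Nonempty) :
    g = 1 := by
  have hginv : g⁻¹ ∈ P :=
    inv_mem_of_forall_rightIdeal_inter_nonempty hS hqlo hgen hdisj fun p hp => (hg p hp).1
  have hg' : g⁻¹⁻¹ ∈ P :=
    inv_mem_of_forall_rightIdeal_inter_nonempty hS hqlo hgen hdisj fun p hp => (hg p hp).2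
  exact inv_eq_one.mp (hunits g⁻¹ hginv hg')
end

section
/- Let R be an integral domain, I, I' ideals of R with I' ⊆ I, J a nonzero ideal with J ⊆ I', and a ∈ 1 + J. Then I' ∩ aI = aI'. -/
theorem Ideal.mul_mem_iff_of_sub_one_mem {R : Type*} [CommRing R] {I : Ideal R} {a : R}
    (ha : a - 1 ∈ I) {s : R} : a * s ∈ I ↔ s ∈ I := by
  refine ⟨fun has => ?_, I.mul_mem_left a⟩
  have hs : s = a * s - (a - 1) * s := by ring
  rw [hs]
  exact I.sub_mem has (I.mul_mem_right s ha)

theorem stmt_10_general {R : Type*} [CommRing R]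
    (I I' J : Ideal R) (hI : I' ≤ I) (hJ : J ≤ I')
    (a : R) (ha : a - 1 ∈ J) :
    (I' : Set R) ∩ ((a * ·) '' (I : Set R)) = (a * ·) '' (I' : Set R) := by
  have ha' : a - 1 ∈ I' := hJ ha
  ext r
  constructor
  · rintro ⟨hr, s, -, rfl⟩
    exact ⟨s, (Ideal.mul_mem_iff_of_sub_one_mem ha').mp hr, rfl⟩
  · rintro ⟨s, hs, rfl⟩
    exact ⟨I'.mul_mem_left a hs, s, hI hs, rfl⟩

/-- Let `R` be an integral domain, `I' ⊆ I` ideals, `J` a nonzero ideal with `J ⊆ I'`,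
and `a ∈ 1 + J`. Then `I' ∩ aI = aI'`. -/
theorem stmt_10 {R : Type*} [CommRing R] [IsDomain R]
    (I I' J : Ideal R) (hI : I' ≤ I) (hJ : J ≤ I') (hJne : J ≠ ⊥)
    (a : R) (ha : a - 1 ∈ J) :
    (I' : Set R) ∩ ((a * ·) '' (I : Set R)) = (a * ·) '' (I' : Set R) :=
  stmt_10_general I I' J hI hJ a ha
end

section
/- If a transformation groupoid G ⋉ X of a global action of a group G on a compact space X is almost finite and some point x ∈ X has trivial stabilizer, then G is amenable. -/
/-!
Let `S = E ∪ E⁻¹` and apply almost finiteness to the compact set `C = S × X`. The fibre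
`F = {k | (k, x) ∈ K}` of the elementary subgroupoid `K` over `x` is finite (`K` is compact and
`G` discrete) and contains `1`, and `C K x = S F`, so `|S F \ F| < (ε/2) |F|`. Since
`|s F △ F| = |s F \ F| + |s⁻¹ F \ F|` and both `s, s⁻¹ ∈ S`, `F` is an `ε`-Følner set for `E`.
-/

open scoped Pointwise symmDiff

namespace Finset

variable {G : Type*} [Group G] [DecidableEq G]

theorem card_smul_finset_symmDiff (s : G) (F : Finset G) :
    ((s • F) ∆ F).card = (s • F \ F).card + (s⁻¹ • F \ F).card := by
  have hleft : F \ s • F = s • (s⁻¹ • F \ F) := by rw [smul_finset_sdiff, smul_inv_smul]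
  rw [symmDiff_def, sup_eq_union, card_union_of_disjoint disjoint_sdiff_sdiff, hleft,
    card_smul_finset]

theorem card_smul_finset_symmDiff_lt {S F : Finset G} {s : G} {δ : ℝ} (hs : s ∈ S)
    (hs' : s⁻¹ ∈ S) (hSF : (((S * F) \ F).card : ℝ) < δ * F.card) :
    (((s • F) ∆ F).card : ℝ) < 2 * δ * F.card := by
  have hbound : ∀ t ∈ S, ((t • F \ F).card : ℝ) < δ * F.card := fun t ht =>
    lt_of_le_of_lt (mod_cast card_le_card (sdiff_subset_sdiff (smul_finset_subset_mul ht)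
      le_rfl)) hSF
  rw [card_smul_finset_symmDiff]
  push_cast
  linarith [hbound s hs, hbound s⁻¹ hs']

end Finset

theorem IsCompact.finite_fiber_fst {G X : Type*} [TopologicalSpace G] [DiscreteTopology G]
    [TopologicalSpace X] {K : Set (G × X)} (hK : IsCompact K) (x : X) :
    {g : G | (g, x) ∈ K}.Finite :=
  (hK.image continuous_fst).finite_of_discrete.subset fun g hg => ⟨(g, x), hg, rfl⟩

theorem setOf_exists_mem_prod_univ_eq_mul {G X : Type*} [Group G] [MulAction G X]
    (A : Set G) (K : Set (G × X)) (x : X) :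
    {k : G | ∃ h : G, (k * h⁻¹, h • x) ∈ A ×ˢ (Set.univ : Set X) ∧ (h, x) ∈ K} =
      A * {k : G | (k, x) ∈ K} := by
  ext k
  simp only [Set.mem_ofPred_eq, Set.mem_prod, Set.mem_univ, and_true, Set.mem_mul]
  constructor
  · rintro ⟨h, hA, hB⟩
    exact ⟨k * h⁻¹, hA, h, hB, inv_mul_cancel_right k h⟩
  · rintro ⟨a, ha, b, hb, rfl⟩
    exact ⟨b, by rwa [mul_inv_cancel_right], hb⟩

theorem stmt_13_general {G X : Type*} [Group G] [TopologicalSpace G] [DiscreteTopology G]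
    [DecidableEq G] [TopologicalSpace X] [CompactSpace X]
    [MulAction G X]
    (x : X)
    (haf : ∀ C : Set (G × X), IsCompact C → ∀ ε : ℝ, 0 < ε →
      ∃ K : Set (G × X), IsCompact K ∧ IsOpen K ∧
        (∀ y : X, ((1 : G), y) ∈ K) ∧
        (∀ g h : G, ∀ y : X, (g, h • y) ∈ K → (h, y) ∈ K → (g * h, y) ∈ K) ∧
        (∀ g : G, ∀ y : X, (g, y) ∈ K → (g⁻¹, g • y) ∈ K) ∧
        (∀ g : G, ∀ y : X, (g, y) ∈ K → g • y = y → g = 1) ∧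
        (∀ y : X,
          ((({k : G | ∃ h : G, (k * h⁻¹, h • y) ∈ C ∧ (h, y) ∈ K} \
                {k : G | (k, y) ∈ K}).ncard : ℝ)
            < ε * (({k : G | (k, y) ∈ K}).ncard : ℝ)))) :
    ∀ E : Finset G, ∀ ε : ℝ, 0 < ε →
      ∃ F : Finset G, F.Nonempty ∧ ∀ s ∈ E, (((s • F) ∆ F).card : ℝ) < ε * F.card := by
  intro E ε hε
  set S : Finset G := E ∪ E⁻¹
  obtain ⟨K, hKc, -, hK1, -, -, -, hbdry⟩ := haf _
    (S.finite_toSet.isCompact.prod isCompact_univ) (ε / 2) (half_pos hε)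
  set F : Finset G := (hKc.finite_fiber_fst x).toFinset
  have hF : (F : Set G) = {k : G | (k, x) ∈ K} := Set.Finite.coe_toFinset _
  have hSF : (((S * F) \ F).card : ℝ) < ε / 2 * F.card := by
    have := hbdry x
    rwa [setOf_exists_mem_prod_univ_eq_mul, ← hF, ← Finset.coe_mul,
      ← Finset.coe_sdiff, Set.ncard_coe_finset, Set.ncard_coe_finset] at this
  refine ⟨F, ⟨1, by simpa [F] using hK1 x⟩, fun s hs => ?_⟩
  have hsε := Finset.card_smul_finset_symmDiff_lt (Finset.mem_union_left _ hs)
    (Finset.mem_union_right _ (Finset.inv_mem_inv hs)) hSF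
  linarith

/-- If the transformation groupoid `G ⋉ X` of a global action of a discrete group `G` on a
compact space `X` is almost finite (for every compact `C ⊆ G ⋉ X` and `ε > 0` there is a
compact open principal subgroupoid `K` with `|CKy \ Ky| < ε|Ky|` for all units `y`), and
some `x ∈ X` has trivial stabilizer, then `G` satisfies the Følner condition, hence is
amenable. -/
theorem stmt_13 {G X : Type*} [Group G] [TopologicalSpace G] [DiscreteTopology G]
    [DecidableEq G] [TopologicalSpace X] [CompactSpace X]
    [MulAction G X] [ContinuousConstSMul G X]
    (x : X) (hx : ∀ g : G, g • x = x → g = 1)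
    (haf : ∀ C : Set (G × X), IsCompact C → ∀ ε : ℝ, 0 < ε →
      ∃ K : Set (G × X), IsCompact K ∧ IsOpen K ∧
        (∀ y : X, ((1 : G), y) ∈ K) ∧
        (∀ g h : G, ∀ y : X, (g, h • y) ∈ K → (h, y) ∈ K → (g * h, y) ∈ K) ∧
        (∀ g : G, ∀ y : X, (g, y) ∈ K → (g⁻¹, g • y) ∈ K) ∧
        (∀ g : G, ∀ y : X, (g, y) ∈ K → g • y = y → g = 1) ∧
        (∀ y : X,
          ((({k : G | ∃ h : G, (k * h⁻¹, h • y) ∈ C ∧ (h, y) ∈ K} \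
                {k : G | (k, y) ∈ K}).ncard : ℝ)
            < ε * (({k : G | (k, y) ∈ K}).ncard : ℝ)))) :
    ∀ E : Finset G, ∀ ε : ℝ, 0 < ε →
      ∃ F : Finset G, F.Nonempty ∧ ∀ s ∈ E, (((s • F) ∆ F).card : ℝ) < ε * F.card :=
  stmt_13_general x haf
end

section
/- In a graph E satisfying condition (PI) (no breaking vertices, condition (K), every vertex in each maximal tail connects to a loop in the tail), every vertex v with infinitely many incoming edges (|r⁻¹(v)| = ∞) lies on infinitely many loops μᵢ = ζᵢηᵢ based at v whose first edges ζᵢ ∈ E¹ are pairwise distinct. -/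
section Graph

variable {V E : Type*}

/-- There is an edge from `a` to `b` (source `a`, range `b`). -/
def Step (s r : E → V) (a b : V) : Prop := ∃ e : E, s e = a ∧ r e = b

/-- `Reaches s r a b`: there is a finite path from `a` to `b` (`b ← a`). -/
def Reaches (s r : E → V) : V → V → Prop := Relation.ReflTransGen (Step s r)

/-- A list of edges is a path: the source of each edge is the range of the next. -/
def IsPathList (s r : E → V) (p : List E) : Prop := List.Chain' (fun e e' => s e = r e') p

/-- A nonempty path which is a loop based at `v`. -/
def IsLoopAt (s r : E → V) (p : List E) (v : V) : Prop :=
  p ≠ [] ∧ IsPathList s r p ∧ (∀ e, p.head? = some e → r e = v) ∧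
    (∀ e, p.getLast? = some e → s e = v)

/-- `Ω(v)`: the vertices `w ≠ v` with `w ↚ v`. -/
def OmegaSet (s r : E → V) (v : V) : Set V := {w | w ≠ v ∧ ¬ Reaches s r v w}

/-- `v` is a breaking vertex: `|r⁻¹(v)| = ∞` and `0 < |r⁻¹(v) \ s⁻¹(Ω(v))| < ∞`. -/
def IsBreaking (s r : E → V) (v : V) : Prop :=
  {e : E | r e = v}.Infinite ∧ {e : E | r e = v ∧ s e ∉ OmegaSet s r v}.Finite ∧
    {e : E | r e = v ∧ s e ∉ OmegaSet s r v}.Nonempty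

/-- Condition (K): every loop admits a second loop at the same base vertex, neither being
an initial segment of the other (`μ·μ' = 0` in the path semilattice). -/
def CondK (s r : E → V) : Prop :=
  ∀ v : V, ∀ p : List E, IsLoopAt s r p v →
    ∃ p' : List E, IsLoopAt s r p' v ∧ ¬ p <+: p' ∧ ¬ p' <+: p

/-- A maximal tail. -/
def MaximalTail (s r : E → V) (M : Set V) : Prop :=
  (∀ v w : V, w ∈ M → Reaches s r w v → v ∈ M) ∧
  (∀ v ∈ M, {e : E | r e = v}.Finite → {e : E | r e = v}.Nonempty →
    ∃ e : E, r e = v ∧ s e ∈ M) ∧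
  (∀ v ∈ M, ∀ w ∈ M, ∃ y ∈ M, Reaches s r y v ∧ Reaches s r y w)

end Graph

/-!
The edges `ζ` into `v` with `v ← s ζ` are exactly those of `r⁻¹(v) ⧹ s⁻¹(Ω(v))`. Since
`v` is not breaking and `|r⁻¹(v)| = ∞`, it suffices to find one such edge, i.e. a loop
through `v`.
The vertices reachable from `v` form a maximal tail (the only vertex of it that could fail to
receive an edge from it is `v`, which has infinitely many incoming edges), so by (PI) some
`w ← v` lies on a loop with `v ← w`; then `v → w → w → v` is a nonempty cycle through `v`.
-/

section Graph

variable {V E : Type*} {s r : E → V}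

theorem setOf_source_not_mem_omegaSet (v : V) :
    {e : E | r e = v ∧ s e ∉ OmegaSet s r v} = {e : E | r e = v ∧ Reaches s r v (s e)} := by
  ext e
  simp only [Set.mem_ofPred_eq, OmegaSet, not_and, not_not, and_congr_right_iff]
  intro _
  refine ⟨fun h => ?_, fun h _ => h⟩
  by_cases hev : s e = v
  · exact hev ▸ Relation.ReflTransGen.refl
  · exact h hev

theorem maximalTail_setOf_reaches {v : V} (hv : {e : E | r e = v}.Infinite) :
    MaximalTail s r {w | Reaches s r v w} := by
  refine ⟨fun a b hb hba => hb.trans hba, fun a ha hfin _ => ?_,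
    fun a ha b hb => ⟨v, .refl, ha, hb⟩⟩
  rcases Relation.ReflTransGen.cases_tail ha with rfl | ⟨c, hvc, e, rfl, hre⟩
  · exact absurd hfin hv
  · exact ⟨e, hre, hvc⟩

theorem IsPathList.transGen_step_cons {e : E} {q : List E} (hp : IsPathList s r (e :: q))
    {f : E} (hf : (e :: q).getLast? = some f) : Relation.TransGen (Step s r) (s f) (r e) := by
  induction q generalizing e with
  | nil =>
    obtain rfl : e = f := by simpa using hf
    exact .single ⟨e, rfl, rfl⟩
  | cons g q ih =>
    obtain ⟨hseg, hq⟩ := List.isChain_cons_cons.mp hp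
    have hgf : Relation.TransGen (Step s r) (s f) (r g) :=
      ih hq (by rwa [List.getLast?_cons_cons] at hf)
    exact hgf.tail ⟨e, hseg.symm ▸ rfl, rfl⟩

theorem IsLoopAt.transGen_step {p : List E} {w : V} (hp : IsLoopAt s r p w) :
    Relation.TransGen (Step s r) w w := by
  obtain ⟨hne, hpath, hhead, hlast⟩ := hp
  obtain ⟨e, q, rfl⟩ := List.exists_cons_of_ne_nil hne
  have hf := List.getLast?_eq_getLast_of_ne_nil hne
  simpa [hhead e rfl, hlast _ hf] using hpath.transGen_step_cons hf

theorem exists_edge_of_transGen_step_self {v : V} (h : Relation.TransGen (Step s r) v v) :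
    ∃ e : E, r e = v ∧ Reaches s r v (s e) := by
  obtain ⟨b, hvb, e, rfl, hre⟩ := Relation.TransGen.tail'_iff.mp h
  exact ⟨e, hre, hvb⟩

end Graph

theorem stmt_14_general {V E : Type*} (s r : E → V)
    (hnb : ∀ v : V, ¬ IsBreaking s r v)
    (htail : ∀ M : Set V, MaximalTail s r M → ∀ v ∈ M,
      ∃ w ∈ M, (∃ p : List E, IsLoopAt s r p w) ∧ Reaches s r w v)
    (v : V) (hv : {e : E | r e = v}.Infinite) :
    {ζ : E | r ζ = v ∧ Reaches s r v (s ζ)}.Infinite := by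
  obtain ⟨w, hvw, ⟨p, hp⟩, hwv⟩ :=
    htail _ (maximalTail_setOf_reaches hv) v Relation.ReflTransGen.refl
  have hcycle : Relation.TransGen (Step s r) v v :=
    Relation.TransGen.trans_right hvw (hp.transGen_step.trans_left hwv)
  have hne : {e : E | r e = v ∧ s e ∉ OmegaSet s r v}.Nonempty := by
    rw [setOf_source_not_mem_omegaSet]
    exact exists_edge_of_transGen_step_self hcycle
  rw [← setOf_source_not_mem_omegaSet]
  exact fun hfin => hnb v ⟨hv, hfin, hne⟩

/-- In a graph satisfying condition (PI) (no breaking vertices, condition (K), and every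
vertex of every maximal tail connects to a loop in the tail), every vertex `v` with
infinitely many incoming edges lies on infinitely many loops with pairwise distinct
first edges. -/
theorem stmt_14 {V E : Type*} [Countable V] [Countable E] (s r : E → V)
    (hnb : ∀ v : V, ¬ IsBreaking s r v)
    (hK : CondK s r)
    (htail : ∀ M : Set V, MaximalTail s r M → ∀ v ∈ M,
      ∃ w ∈ M, (∃ p : List E, IsLoopAt s r p w) ∧ Reaches s r w v)
    (v : V) (hv : {e : E | r e = v}.Infinite) :
    {ζ : E | r ζ = v ∧ Reaches s r v (s ζ)}.Infinite :=
  stmt_14_general s r hnb htail v hv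
end

section
/- Let S be an inverse semigroup with zero, E its semilattice of idempotents, and σ : S⧹{0} → G an idempotent pure partial homomorphism to a group G. For s ∈ S⧹{0} with σ(s) = g and a character χ of E with χ(s*s) = 1, define (g.χ)(e) = χ(s*es). Then this is well-defined (independent of the choice of s with σ(s) = g and χ(s*s) = 1) and g.χ is again a character with (g.χ)(ss*) = 1. -/
/-!
Write `s*` for `star s`. Conjugation `e ↦ s* e s` maps idempotents to idempotents and is
multiplicative on them, because `e` commutes with the idempotent `s s*`; this makes `g.χ` a
character, and `s* (s s*) s = s* s` gives `(g.χ)(s s*) = 1`. For well-definedness, `χ` does not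
vanish on `(s* s)(t* t) = s* (s t*) t`, so `s t* ≠ 0` and `σ(s t*) = g g⁻¹ = 1`; idempotent purity
makes `v = s t*` idempotent. Since `v` commutes with `e`, the element `s* e v t` equals both
`(s* e s)(t* t)` and `(s* s)(t* e t)`, and applying `χ` to the two expressions gives
`χ(s* e s) = χ(t* e t)`.
-/

/-- Regularity with commuting idempotents: this makes `S` an inverse semigroup and `star s` the
unique inverse of `s`. -/
structure IsInverseStar {S : Type*} [Mul S] (star : S → S) : Prop where
  mul_star_mul : ∀ s, s * star s * s = s
  star_mul_star : ∀ s, star s * s * star s = star s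
  idem_comm : ∀ e f : S, IsIdempotentElem e → IsIdempotentElem f → e * f = f * e

namespace IsInverseStar

section Semigroup

variable {S : Type*} [Semigroup S] {star : S → S} (h : IsInverseStar star)
include h

theorem isIdempotentElem_mul_star (s : S) : IsIdempotentElem (s * star s) := by
  rw [IsIdempotentElem, ← mul_assoc, h.mul_star_mul]

theorem isIdempotentElem_star_mul (s : S) : IsIdempotentElem (star s * s) := by
  rw [IsIdempotentElem, ← mul_assoc, h.star_mul_star]

theorem star_mul_mul_star_mul (s : S) : star s * (s * star s) * s = star s * s := by
  rw [← mul_assoc, h.star_mul_star]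

theorem conj_mul_conj {e : S} (he : IsIdempotentElem e) (s f : S) :
    star s * e * s * (star s * f * s) = star s * (e * f) * s :=
  calc star s * e * s * (star s * f * s) = star s * (e * (s * star s)) * f * s := by
        simp only [mul_assoc]
    _ = star s * (s * star s * e) * f * s := by
        rw [h.idem_comm e _ he (h.isIdempotentElem_mul_star s)]
    _ = star s * (e * f) * s := by
        simp only [← mul_assoc, h.star_mul_star]

theorem isIdempotentElem_conj {e : S} (he : IsIdempotentElem e) (s : S) :
    IsIdempotentElem (star s * e * s) := by
  rw [IsIdempotentElem, h.conj_mul_conj he, he.eq]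

end Semigroup

section PartialHom

variable {S G : Type*} [SemigroupWithZero S] [Group G] {star : S → S} (h : IsInverseStar star)
  {σ : S → G}
include h

theorem mul_star_ne_zero {s : S} (hs : s ≠ 0) : s * star s ≠ 0 := by
  intro h0
  apply hs
  rw [← h.mul_star_mul s, h0, zero_mul]

theorem map_star (hσ : ∀ s t : S, s * t ≠ 0 → σ (s * t) = σ s * σ t)
    (hpure : ∀ s : S, s ≠ 0 → (σ s = 1 ↔ s * s = s)) {s : S} (hs : s ≠ 0) :
    σ (star s) = (σ s)⁻¹ := by
  have hne := h.mul_star_ne_zero hs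
  have hone : σ (s * star s) = 1 := (hpure _ hne).mpr (h.isIdempotentElem_mul_star s)
  rw [hσ _ _ hne] at hone
  exact eq_inv_of_mul_eq_one_right hone

theorem isIdempotentElem_mul_star_of_map_eq
    (hσ : ∀ s t : S, s * t ≠ 0 → σ (s * t) = σ s * σ t)
    (hpure : ∀ s : S, s ≠ 0 → (σ s = 1 ↔ s * s = s)) {s t : S} (ht : t ≠ 0)
    (hst : s * star t ≠ 0) (hσst : σ s = σ t) : IsIdempotentElem (s * star t) := by
  refine (hpure _ hst).mp ?_
  rw [hσ _ _ hst, h.map_star hσ hpure ht, hσst, mul_inv_cancel]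

theorem character_conj_iff_of_isIdempotentElem_mul_star {χ : S → Prop}
    (hmul : ∀ e f : S, e * e = e → f * f = f → (χ (e * f) ↔ χ e ∧ χ f))
    {s t : S} (hχs : χ (star s * s)) (hχt : χ (star t * t))
    (hv : IsIdempotentElem (s * star t)) {e : S} (he : IsIdempotentElem e) :
    χ (star s * e * s) ↔ χ (star t * e * t) := by
  have hleft : star s * e * s * (star t * t) = star s * e * (s * star t) * t := by
    simp only [mul_assoc]
  have hright : star s * s * (star t * e * t) = star s * e * (s * star t) * t :=
    calc star s * s * (star t * e * t) = star s * ((s * star t) * e) * t := by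
          simp only [mul_assoc]
      _ = star s * e * (s * star t) * t := by
          rw [h.idem_comm _ _ hv he]
          simp only [mul_assoc]
  have hl := hmul _ _ (h.isIdempotentElem_conj he s) (h.isIdempotentElem_star_mul t)
  have hr := hmul _ _ (h.isIdempotentElem_star_mul s) (h.isIdempotentElem_conj he t)
  rw [hleft] at hl
  rw [hright] at hr
  constructor
  · intro hχ
    exact (hr.mp (hl.mpr ⟨hχ, hχt⟩)).2
  · intro hχ
    exact (hl.mp (hr.mpr ⟨hχs, hχ⟩)).1

end PartialHom

end IsInverseStar

theorem stmt_17_general {S G : Type*} [SemigroupWithZero S] [Group G]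
    (star : S → S)
    (hst1 : ∀ s : S, s * star s * s = s)
    (hst2 : ∀ s : S, star s * s * star s = star s)
    (hcomm : ∀ e f : S, e * e = e → f * f = f → e * f = f * e)
    (σ : S → G)
    (hσ : ∀ s t : S, s * t ≠ 0 → σ (s * t) = σ s * σ t)
    (hpure : ∀ s : S, s ≠ 0 → (σ s = 1 ↔ s * s = s))
    (χ : S → Prop)
    (hmul : ∀ e f : S, e * e = e → f * f = f → (χ (e * f) ↔ χ e ∧ χ f))
    (hzero : ¬ χ 0)
    (g : G) (s t : S) (ht : t ≠ 0)
    (hσs : σ s = g) (hσt : σ t = g)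
    (hχs : χ (star s * s)) (hχt : χ (star t * t)) :
    (∀ e : S, e * e = e → (χ (star s * e * s) ↔ χ (star t * e * t))) ∧
    χ (star s * (s * star s) * s) ∧
    (∀ e f : S, e * e = e → f * f = f →
      (χ (star s * (e * f) * s) ↔ χ (star s * e * s) ∧ χ (star s * f * s))) ∧
    ¬ χ (star s * 0 * s) := by
  have h : IsInverseStar star := ⟨hst1, hst2, hcomm⟩
  have hst : s * star t ≠ 0 := by
    intro h0
    apply hzero
    have hχst := (hmul _ _ (h.isIdempotentElem_star_mul s) (h.isIdempotentElem_star_mul t)).mpr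
      ⟨hχs, hχt⟩
    rwa [show star s * s * (star t * t) = star s * (s * star t) * t by simp only [mul_assoc],
      h0, mul_zero, zero_mul] at hχst
  have hv := h.isIdempotentElem_mul_star_of_map_eq hσ hpure ht hst (hσs.trans hσt.symm)
  refine ⟨fun e he => h.character_conj_iff_of_isIdempotentElem_mul_star hmul hχs hχt hv he,
    h.star_mul_mul_star_mul s ▸ hχs, fun e f he hf => ?_, by rwa [mul_zero, zero_mul]⟩
  rw [← h.conj_mul_conj he]
  exact hmul _ _ (h.isIdempotentElem_conj he s) (h.isIdempotentElem_conj hf s)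

/-- Let `S` be an inverse semigroup with zero (involution `star`, idempotents commuting),
`σ : S \ {0} → G` an idempotent pure partial homomorphism to a group `G`, and `χ` a
character of the semilattice of idempotents `E` of `S`. Given `g ∈ G` and `s, t ≠ 0` with
`σ(s) = σ(t) = g` and `χ(s*s) = χ(t*t) = 1`, the formula `(g.χ)(e) = χ(s* e s)` is
well-defined (independent of `s`), and `g.χ` is again a character with `(g.χ)(ss*) = 1`. -/
theorem stmt_17 {S G : Type*} [SemigroupWithZero S] [Group G]
    (star : S → S)
    (hst1 : ∀ s : S, s * star s * s = s)
    (hst2 : ∀ s : S, star s * s * star s = star s)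
    (hstst : ∀ s : S, star (star s) = s)
    (hstmul : ∀ s t : S, star (s * t) = star t * star s)
    (hcomm : ∀ e f : S, e * e = e → f * f = f → e * f = f * e)
    (σ : S → G)
    (hσ : ∀ s t : S, s * t ≠ 0 → σ (s * t) = σ s * σ t)
    (hpure : ∀ s : S, s ≠ 0 → (σ s = 1 ↔ s * s = s))
    (χ : S → Prop)
    (hmul : ∀ e f : S, e * e = e → f * f = f → (χ (e * f) ↔ χ e ∧ χ f))
    (hzero : ¬ χ 0)
    (g : G) (s t : S) (hs : s ≠ 0) (ht : t ≠ 0)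
    (hσs : σ s = g) (hσt : σ t = g)
    (hχs : χ (star s * s)) (hχt : χ (star t * t)) :
    (∀ e : S, e * e = e → (χ (star s * e * s) ↔ χ (star t * e * t))) ∧
    χ (star s * (s * star s) * s) ∧
    (∀ e f : S, e * e = e → f * f = f →
      (χ (star s * (e * f) * s) ↔ χ (star s * e * s) ∧ χ (star s * f * s))) ∧
    ¬ χ (star s * 0 * s) :=
  stmt_17_general star hst1 hst2 hcomm σ hσ hpure χ hmul hzero g s t ht hσs hσt hχs hχt
end

section
/- With S, E, σ, G as above and the partial action of G on characters of E, the set of maximal characters is invariant: for g ∈ G and a maximal character χ in the domain U_{g⁻¹} (i.e., χ(s*s) = 1 for some s with σ(s) = g), the character g.χ is again maximal. -/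
/-!
Write `t = s*`. Conjugation `χ ↦ (e ↦ χ (t e s))` and `ψ ↦ (e ↦ ψ (s e t))` send characters to
characters, are monotone, and are mutually inverse on characters with `χ (t s)`, resp. `ψ (s t)`,
because `t (s e t) s = e t s` for idempotent `e` (idempotents commute). So a character dominating
the conjugate of a maximal `χ` conjugates back to a character dominating `χ`, hence equal to `χ`.
-/

/-- A character of the idempotent semilattice of a semigroup with zero: a nonzero
multiplicative `{0,1}`-valued map on idempotents, vanishing at `0`. -/
def IsChar {S : Type*} [SemigroupWithZero S] (χ : S → Prop) : Prop :=
  (∀ e f : S, e * e = e → f * f = f → (χ (e * f) ↔ χ e ∧ χ f)) ∧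
    ¬ χ 0 ∧ (∃ e : S, χ e) ∧ (∀ e : S, χ e → e * e = e)

/-- A maximal character: no character strictly dominates it. -/
def IsMaxChar {S : Type*} [SemigroupWithZero S] (χ : S → Prop) : Prop :=
  IsChar χ ∧ ∀ ψ : S → Prop, IsChar ψ → (∀ e, χ e → ψ e) → ∀ e, ψ e → χ e

section Semigroup

variable {S : Type*} [Semigroup S] {s t e f : S}

theorem isIdempotentElem_mul_of_mul_mul_eq (h : s * t * s = s) : IsIdempotentElem (s * t) := by
  rw [IsIdempotentElem, ← mul_assoc, h]

theorem mul_mul_idem_mul_eq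
    (hcomm : ∀ e f : S, IsIdempotentElem e → IsIdempotentElem f → Commute e f)
    (h : s * t * s = s) (he : IsIdempotentElem e) : s * t * e * s = e * s := by
  rw [(hcomm _ _ (isIdempotentElem_mul_of_mul_mul_eq h) he).eq, mul_assoc e, h]

theorem conj_mul_conj
    (hcomm : ∀ e f : S, IsIdempotentElem e → IsIdempotentElem f → Commute e f)
    (h : s * t * s = s) (hf : IsIdempotentElem f) :
    t * e * s * (t * f * s) = t * (e * f) * s := by
  calc t * e * s * (t * f * s) = t * e * (s * t * f * s) := by simp only [mul_assoc]
    _ = t * (e * f) * s := by rw [mul_mul_idem_mul_eq hcomm h hf]; simp only [mul_assoc]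

theorem isIdempotentElem_conj
    (hcomm : ∀ e f : S, IsIdempotentElem e → IsIdempotentElem f → Commute e f)
    (h : s * t * s = s) (he : IsIdempotentElem e) : IsIdempotentElem (t * e * s) := by
  rw [IsIdempotentElem, conj_mul_conj hcomm h he, he.eq]

theorem conj_conj
    (hcomm : ∀ e f : S, IsIdempotentElem e → IsIdempotentElem f → Commute e f)
    (h : t * s * t = t) (he : IsIdempotentElem e) : t * (s * e * t) * s = e * t * s := by
  rw [← mul_mul_idem_mul_eq hcomm h he]
  simp only [mul_assoc]

end Semigroup

section SemigroupWithZero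

variable {S : Type*} [SemigroupWithZero S] {s t : S} {χ ψ : S → Prop}

def conjChar (t s : S) (χ : S → Prop) : S → Prop :=
  fun e => e * e = e ∧ χ (t * e * s)

theorem conjChar_mul (hsts : s * t * s = s) (htst : t * s * t = t) (hdom : χ (t * s)) :
    conjChar t s χ (s * t) :=
  ⟨isIdempotentElem_mul_of_mul_mul_eq hsts, by rwa [← mul_assoc, htst]⟩

theorem IsChar.conj
    (hcomm : ∀ e f : S, IsIdempotentElem e → IsIdempotentElem f → Commute e f)
    (hsts : s * t * s = s) (htst : t * s * t = t) (hχ : IsChar χ) (hdom : χ (t * s)) :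
    IsChar (conjChar t s χ) := by
  obtain ⟨hmul, hzero, -, -⟩ := hχ
  refine ⟨fun e f he hf => ?_, ?_, ⟨s * t, conjChar_mul hsts htst hdom⟩, fun e he => he.1⟩
  · have hχmul := hmul _ _ (isIdempotentElem_conj hcomm hsts he)
      (isIdempotentElem_conj hcomm hsts hf)
    rw [conj_mul_conj hcomm hsts hf] at hχmul
    simp only [conjChar, hχmul, (IsIdempotentElem.mul_of_commute (hcomm e f he hf) he hf).eq]
    tauto
  · simp [conjChar, hzero]

theorem IsChar.conjChar_conjChar
    (hcomm : ∀ e f : S, IsIdempotentElem e → IsIdempotentElem f → Commute e f)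
    (htst : t * s * t = t) (hχ : IsChar χ) (hdom : χ (t * s)) :
    conjChar s t (conjChar t s χ) = χ := by
  funext e
  refine propext ⟨fun ⟨he, _, h⟩ => ?_, fun h => ?_⟩
  · rw [conj_conj hcomm htst he, mul_assoc] at h
    exact ((hχ.1 e _ he (isIdempotentElem_mul_of_mul_mul_eq htst)).mp h).1
  · have he : IsIdempotentElem e := hχ.2.2.2 e h
    refine ⟨he, isIdempotentElem_conj hcomm htst he, ?_⟩
    rw [conj_conj hcomm htst he, mul_assoc]
    exact (hχ.1 e _ he (isIdempotentElem_mul_of_mul_mul_eq htst)).mpr ⟨h, hdom⟩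

theorem IsMaxChar.conj
    (hcomm : ∀ e f : S, IsIdempotentElem e → IsIdempotentElem f → Commute e f)
    (hsts : s * t * s = s) (htst : t * s * t = t) (hχ : IsMaxChar χ) (hdom : χ (t * s)) :
    IsMaxChar (conjChar t s χ) := by
  refine ⟨hχ.1.conj hcomm hsts htst hdom, fun ψ hψ hle => ?_⟩
  have hψdom : ψ (s * t) := hle _ (conjChar_mul hsts htst hdom)
  have hψχ : ∀ e, conjChar s t ψ e → χ e :=
    hχ.2 _ (hψ.conj hcomm htst hsts hψdom) fun e he => by
      rw [← hχ.1.conjChar_conjChar hcomm htst hdom] at he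
      exact ⟨he.1, hle _ he.2⟩
  rw [← hψ.conjChar_conjChar hcomm hsts hψdom]
  exact fun e he => ⟨he.1, hψχ _ he.2⟩

end SemigroupWithZero

theorem stmt_18_general {S : Type*} [SemigroupWithZero S]
    (star : S → S)
    (hst1 : ∀ s : S, s * star s * s = s)
    (hst2 : ∀ s : S, star s * s * star s = star s)
    (hcomm : ∀ e f : S, e * e = e → f * f = f → e * f = f * e)
    (s : S)
    (χ : S → Prop) (hχ : IsMaxChar χ) (hdom : χ (star s * s)) :
    IsMaxChar (fun e => e * e = e ∧ χ (star s * e * s)) :=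
  hχ.conj hcomm (hst1 s) (hst2 s) hdom

/-- Let `S` be an inverse semigroup with zero, `σ : S \ {0} → G` an idempotent pure
partial homomorphism. For `g ∈ G` and a maximal character `χ` in the domain `U_{g⁻¹}`
(i.e. `χ(s*s) = 1` for some `s ≠ 0` with `σ(s) = g`), the translated character
`g.χ : e ↦ χ(s* e s)` is again maximal. -/
theorem stmt_18 {S G : Type*} [SemigroupWithZero S] [Group G]
    (star : S → S)
    (hst1 : ∀ s : S, s * star s * s = s)
    (hst2 : ∀ s : S, star s * s * star s = star s)
    (hstst : ∀ s : S, star (star s) = s)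
    (hstmul : ∀ s t : S, star (s * t) = star t * star s)
    (hcomm : ∀ e f : S, e * e = e → f * f = f → e * f = f * e)
    (σ : S → G)
    (hσ : ∀ s t : S, s * t ≠ 0 → σ (s * t) = σ s * σ t)
    (hpure : ∀ s : S, s ≠ 0 → (σ s = 1 ↔ s * s = s))
    (g : G) (s : S) (hs : s ≠ 0) (hσs : σ s = g)
    (χ : S → Prop) (hχ : IsMaxChar χ) (hdom : χ (star s * s)) :
    IsMaxChar (fun e => e * e = e ∧ χ (star s * e * s)) :=
  stmt_18_general star hst1 hst2 hcomm s χ hχ hdom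
end
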